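/- Let A = (a_{ij}) be an n×n real matrix such that D(A) belongs to the class 𝒟, D(A) is strongly connected, and Δ_A ≠ 0. Let B = (b_{ij}) be the n×n matrix with entries b_{ij} = μ_{ij}/Δ_A. Then BAB = B. -/

import Mathlib

open Matrix

/-- Adjacency in a digraph given by relation `G`: a 2-cycle between distinct `i` and `j`. -/
def Adjd {n : ℕ} (G : Fin n → Fin n → Prop) (i j : Fin n) : Prop :=
  i ≠ j ∧ G i j ∧ G j i

/-- `G` is a simple symmetric digraph: no loops and edges come in both directions. -/
def IsSSD {n : ℕ} (G : Fin n → Fin n → Prop) : Prop :=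
  (∀ i, ¬ G i i) ∧ ∀ i j, G i j → G j i

/-- A vertex is pendant if it is incident to exactly one 2-cycle. -/
def Pendant {n : ℕ} (G : Fin n → Fin n → Prop) (i : Fin n) : Prop :=
  ∃! j, Adjd G i j

/-- The class 𝒟: simple symmetric digraphs in which every non-pendant vertex is
adjacent to at least one pendant vertex. -/
def InClassD {n : ℕ} (G : Fin n → Fin n → Prop) : Prop :=
  IsSSD G ∧ ∀ i, ¬ Pendant G i → ∃ j, Adjd G i j ∧ Pendant G j

/-- Strong connectivity: a directed path from every vertex to every other vertex. -/
def StronglyConnected {n : ℕ} (G : Fin n → Fin n → Prop) : Prop :=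
  ∀ i j : Fin n, Relation.ReflTransGen G i j

/-- An unordered pair `e` is a 2-cycle of `G`. -/
def IsEdge {n : ℕ} (G : Fin n → Fin n → Prop) (e : Sym2 (Fin n)) : Prop :=
  ∃ i j, e = s(i, j) ∧ Adjd G i j

/-- A matching: a set of pairwise vertex-disjoint 2-cycles. -/
def IsMatching {n : ℕ} (G : Fin n → Fin n → Prop) (M : Finset (Sym2 (Fin n))) : Prop :=
  (∀ e ∈ M, IsEdge G e) ∧
  ∀ e ∈ M, ∀ f ∈ M, e ≠ f → ∀ v : Fin n, v ∈ e → v ∉ f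

/-- A maximum matching: a matching of maximum cardinality. -/
def IsMaxMatching {n : ℕ} (G : Fin n → Fin n → Prop) (M : Finset (Sym2 (Fin n))) : Prop :=
  IsMatching G M ∧ ∀ M', IsMatching G M' → M'.card ≤ M.card

/-- A cycle chain, recorded by its list of (distinct) vertices `i₁, …, i_{m+1}`. -/
def IsCycleChain {n : ℕ} (G : Fin n → Fin n → Prop) (c : List (Fin n)) : Prop :=
  c.Nodup ∧ 2 ≤ c.length ∧ c.Chain' (Adjd G)

/-- A cycle chain from `i` to `j`. -/
def IsCycleChainBtw {n : ℕ} (G : Fin n → Fin n → Prop) (i j : Fin n) (c : List (Fin n)) : Prop :=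
  IsCycleChain G c ∧ c.head? = some i ∧ c.getLast? = some j

/-- The list of 2-cycles of a cycle chain. -/
def chainEdges {n : ℕ} (c : List (Fin n)) : List (Sym2 (Fin n)) :=
  List.zipWith (fun a b => s(a, b)) c c.tail

/-- The cycle chain `c` is alternating with respect to `M`: its 2-cycles are alternately
in `M` and outside `M`, with the first and last 2-cycle in `M` (so its length is odd). -/
def IsAltChain {n : ℕ} (M : Finset (Sym2 (Fin n))) (c : List (Fin n)) : Prop :=
  Odd (chainEdges c).length ∧
  ∀ k (h : k < (chainEdges c).length), ((chainEdges c).get ⟨k, h⟩ ∈ M ↔ Even k)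

/-- The digraph of a square matrix: edge `(i,j)` iff `A i j ≠ 0`. -/
def DA {n : ℕ} (A : Matrix (Fin n) (Fin n) ℝ) : Fin n → Fin n → Prop :=
  fun i j => A i j ≠ 0

/-- The cycle product `a_{ij} a_{ji}` of a 2-cycle. -/
def cycProd {n : ℕ} (A : Matrix (Fin n) (Fin n) ℝ) (e : Sym2 (Fin n)) : ℝ :=
  Sym2.lift ⟨fun i j => A i j * A j i, fun i j => mul_comm _ _⟩ e

/-- The matching product η(M) of a matching `M`. -/
noncomputable def matchProd {n : ℕ} (A : Matrix (Fin n) (Fin n) ℝ)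
    (M : Finset (Sym2 (Fin n))) : ℝ :=
  ∏ e ∈ M, cycProd A e

/-- The (finite) collection of all maximum matchings of `D(A)`. -/
noncomputable def maxMatchings {n : ℕ} (A : Matrix (Fin n) (Fin n) ℝ) :
    Finset (Finset (Sym2 (Fin n))) :=
  {M | IsMaxMatching (DA A) M}.toFinite.toFinset

/-- Δ_A: the sum of the matching products over all maximum matchings of `D(A)`. -/
noncomputable def Delta {n : ℕ} (A : Matrix (Fin n) (Fin n) ℝ) : ℝ :=
  ∑ M ∈ maxMatchings A, matchProd A M

/-- 𝕄(i,j): maximum matchings with respect to which some cycle chain from `i` to `j`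
is an alternating cycle chain. -/
def MMset {n : ℕ} (A : Matrix (Fin n) (Fin n) ℝ) (i j : Fin n) :
    Set (Finset (Sym2 (Fin n))) :=
  {M | IsMaxMatching (DA A) M ∧ ∃ c, IsCycleChainBtw (DA A) i j c ∧ IsAltChain M c}

/-- `i` and `j` are maximally matchable: 𝕄(i,j) ≠ ∅. -/
def MaxMatchable {n : ℕ} (A : Matrix (Fin n) (Fin n) ℝ) (i j : Fin n) : Prop :=
  (MMset A i j).Nonempty

open scoped Classical in
/-- The (unique) alternating cycle chain from `i` to `j`, when it exists. -/
noncomputable def theChain {n : ℕ} (A : Matrix (Fin n) (Fin n) ℝ) (i j : Fin n) :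
    List (Fin n) :=
  if h : ∃ c, IsCycleChainBtw (DA A) i j c ∧ ∃ M ∈ MMset A i j, IsAltChain M c
  then h.choose else []

/-- The path product along a cycle chain: `a_{i₁ i₂} a_{i₂ i₃} ⋯ a_{i_m i_{m+1}}`. -/
def pathProd {n : ℕ} (A : Matrix (Fin n) (Fin n) ℝ) (c : List (Fin n)) : ℝ :=
  (List.zipWith (fun a b => A a b) c c.tail).prod

open scoped Classical in
/-- β_{ij} = (−1)^{(m−1)/2} P_m(i,j) for maximally matchable `i, j`, and `0` otherwise. -/
noncomputable def beta {n : ℕ} (A : Matrix (Fin n) (Fin n) ℝ) (i j : Fin n) : ℝ :=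
  if MaxMatchable A i j then
    (-1 : ℝ) ^ (((theChain A i j).length - 2) / 2) * pathProd A (theChain A i j)
  else 0

/-- β̄_{i,j}(M): product of the cycle products of the 2-cycles of `M` not contained in
the alternating cycle chain from `i` to `j`. -/
noncomputable def betaBar {n : ℕ} (A : Matrix (Fin n) (Fin n) ℝ) (i j : Fin n)
    (M : Finset (Sym2 (Fin n))) : ℝ :=
  ∏ e ∈ M.filter (fun e => e ∉ chainEdges (theChain A i j)), cycProd A e

/-- μ_{ij} = β_{ij} · Σ_{M ∈ 𝕄(i,j)} β̄_{i,j}(M). -/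
noncomputable def mu {n : ℕ} (A : Matrix (Fin n) (Fin n) ℝ) (i j : Fin n) : ℝ :=
  beta A i j * ∑ M ∈ (MMset A i j).toFinite.toFinset, betaBar A i j M

/-- `X` is a group inverse of `A`. -/
def IsGroupInverse {n : ℕ} (A X : Matrix (Fin n) (Fin n) ℝ) : Prop :=
  A * X * A = A ∧ X * A * X = X ∧ A * X = X * A

/-- A tree digraph: strongly connected and all of its cycles have length 2. -/
def IsTreeDigraph {n : ℕ} (G : Fin n → Fin n → Prop) : Prop :=
  StronglyConnected G ∧
  ∀ (a : Fin n) (l : List (Fin n)), (a :: l).Nodup → List.Chain G a l →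
    G ((a :: l).getLast (List.cons_ne_nil a l)) a → (a :: l).length = 2

/-- A star tree digraph: a tree digraph with a center adjacent to every other vertex,
every other vertex being adjacent only to the center. -/
def IsStarTree {n : ℕ} (G : Fin n → Fin n → Prop) : Prop :=
  IsTreeDigraph G ∧
  ∃ c : Fin n, (∀ j, j ≠ c → Adjd G c j) ∧ ∀ i j, Adjd G i j → i = c ∨ j = c

/-- A corona digraph: a simple symmetric digraph in which each non-pendant vertex is
adjacent to exactly one pendant vertex. -/
def IsCorona {n : ℕ} (G : Fin n → Fin n → Prop) : Prop :=
  IsSSD G ∧ ∀ i, ¬ Pendant G i → ∃! j, Adjd G i j ∧ Pendant G j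

/-- 𝕄(i): the maximum matchings in which vertex `i` is matched. -/
noncomputable def MMi {n : ℕ} (A : Matrix (Fin n) (Fin n) ℝ) (i : Fin n) :
    Finset (Finset (Sym2 (Fin n))) :=
  {M | IsMaxMatching (DA A) M ∧ ∃ e ∈ M, i ∈ e}.toFinite.toFinset

/-!
Let `R` consist of the non-pendant vertices together with one end of each isolated 2-cycle.
Every other vertex is a leaf hanging on a unique stem in `R`, and the maximum matchings are
exactly the choices of one leaf for each stem. Hence `Δ_A = ∏_{v ∈ R} S_v` with
`S_v = ∑ a_{vp} a_{pv}` over the leaves `p` of `v`, and the only alternating cycle chains are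
`(p, v)`, `(v, p)` and `(p, v, w, q)` for leaves `p, q` of adjacent stems `v, w`. Evaluating `μ`
on them gives `B = U + W - U A W`, where `U` sends each leaf `p` to its stem `v` with weight
`a_{pv} / S_v` and `W` sends `v` to `p` with weight `a_{vp} / S_v`. With `E` the projection onto
the stems, `A U = E = W A`, `U E = U`, `E U = 0` and `E W = W`, and `BAB = B` becomes a ring
identity.
-/

theorem add_sub_outer_inverse {α : Type*} [Ring α] {a u w e : α}
    (hau : a * u = e) (hwa : w * a = e) (hue : u * e = u) (heu : e * u = 0) (hew : e * w = w) :
    (u + w - u * a * w) * a * (u + w - u * a * w) = u + w - u * a * w := by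
  have huau : u * a * u = u := by rw [mul_assoc, hau, hue]
  have hwau : w * a * u = 0 := by rw [hwa, heu]
  have hwaw : w * a * w = w := by rw [hwa, hew]
  calc _ = u * a * u + u * a * w - u * a * u * a * w + w * a * u + w * a * w
        - w * a * u * a * w - u * a * (w * a * u) - u * a * (w * a * w)
        + u * a * (w * a * u) * a * w := by noncomm_ring
    _ = _ := by rw [huau, hwau, hwaw]; noncomm_ring

section StemMatrices

variable {ι K : Type*} [Fintype ι] [DecidableEq ι] [Field K]
  (A : Matrix ι ι K) (R : Finset ι) (s : ι → ι)

def leavesOf (v : ι) : Finset ι := {p | p ∉ R ∧ s p = v}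

def leafWeight (v : ι) : K := ∑ p ∈ leavesOf R s v, A v p * A p v

def leafToStem : Matrix ι ι K :=
  fun x v => if x ∉ R ∧ s x = v then A x v / leafWeight A R s v else 0

def stemToLeaf : Matrix ι ι K :=
  fun v y => if y ∉ R ∧ s y = v then A v y / leafWeight A R s v else 0

def stemProj : Matrix ι ι K := diagonal fun v => if v ∈ R then 1 else 0

def stemInverse : Matrix ι ι K :=
  leafToStem A R s + stemToLeaf A R s - leafToStem A R s * A * stemToLeaf A R s

variable {A R s}

theorem mem_leavesOf {v p : ι} : p ∈ leavesOf R s v ↔ p ∉ R ∧ s p = v := by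
  simp [leavesOf]

theorem leavesOf_eq_empty (hs : ∀ x ∉ R, s x ∈ R) {v : ι} (hv : v ∉ R) :
    leavesOf R s v = ∅ :=
  Finset.eq_empty_of_forall_notMem fun p hp => by
    rw [mem_leavesOf] at hp
    exact hv (hp.2 ▸ hs p hp.1)

theorem mul_leafToStem (hs : ∀ x ∉ R, s x ∈ R) (hcol : ∀ x ∉ R, ∀ k ≠ s x, A k x = 0)
    (hw : ∀ v ∈ R, leafWeight A R s v ≠ 0) : A * leafToStem A R s = stemProj R := by
  ext k v
  have hsum : (A * leafToStem A R s) k v =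
      ∑ x ∈ leavesOf R s v, A k x * A x v / leafWeight A R s v := by
    simp only [mul_apply, leafToStem, mul_ite, mul_zero, ← Finset.sum_filter, leavesOf,
      mul_div_assoc]
  rw [hsum, stemProj, diagonal_apply]
  by_cases hv : v ∈ R
  · by_cases hkv : k = v
    · rw [if_pos hkv, hkv, if_pos hv, ← Finset.sum_div]
      exact div_self (hw v hv)
    · rw [if_neg hkv]
      refine Finset.sum_eq_zero fun x hx => ?_
      rw [mem_leavesOf] at hx
      rw [hcol x hx.1 k (hx.2 ▸ hkv), zero_mul, zero_div]
  · simp only [leavesOf_eq_empty hs hv, Finset.sum_empty]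
    split_ifs <;> simp_all

theorem stemToLeaf_mul (hs : ∀ x ∉ R, s x ∈ R) (hrow : ∀ x ∉ R, ∀ k ≠ s x, A x k = 0)
    (hw : ∀ v ∈ R, leafWeight A R s v ≠ 0) : stemToLeaf A R s * A = stemProj R := by
  ext v k
  have hsum : (stemToLeaf A R s * A) v k =
      ∑ y ∈ leavesOf R s v, A v y * A y k / leafWeight A R s v := by
    simp only [mul_apply, stemToLeaf, ite_mul, zero_mul, ← Finset.sum_filter, leavesOf,
      div_mul_eq_mul_div]
  rw [hsum, stemProj, diagonal_apply]
  by_cases hv : v ∈ R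
  · by_cases hvk : v = k
    · rw [if_pos hvk, if_pos hv, ← hvk, ← Finset.sum_div]
      exact div_self (hw v hv)
    · rw [if_neg hvk]
      refine Finset.sum_eq_zero fun y hy => ?_
      rw [mem_leavesOf] at hy
      rw [hrow y hy.1 k (hy.2 ▸ Ne.symm hvk), mul_zero, zero_div]
  · simp only [leavesOf_eq_empty hs hv, Finset.sum_empty]
    split_ifs <;> simp_all

theorem leafToStem_mul_stemProj (hs : ∀ x ∉ R, s x ∈ R) :
    leafToStem A R s * stemProj R = leafToStem A R s := by
  ext x v
  rw [stemProj, mul_diagonal, leafToStem]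
  by_cases hv : v ∈ R
  · simp [hv]
  · have hx : ¬(x ∉ R ∧ s x = v) := fun h => hv (h.2 ▸ hs x h.1)
    simp [hv, hx]

theorem stemProj_mul_leafToStem : stemProj R * leafToStem A R s = 0 := by
  ext x v
  rw [stemProj, diagonal_mul, leafToStem]
  split_ifs <;> simp_all

theorem stemProj_mul_stemToLeaf (hs : ∀ x ∉ R, s x ∈ R) :
    stemProj R * stemToLeaf A R s = stemToLeaf A R s := by
  ext v y
  rw [stemProj, diagonal_mul, stemToLeaf]
  by_cases hv : v ∈ R
  · simp [hv]
  · have hy : ¬(y ∉ R ∧ s y = v) := fun h => hv (h.2 ▸ hs y h.1)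
    simp [hv, hy]

theorem stemInverse_mul_mul (hs : ∀ x ∉ R, s x ∈ R)
    (hcol : ∀ x ∉ R, ∀ k ≠ s x, A k x = 0) (hrow : ∀ x ∉ R, ∀ k ≠ s x, A x k = 0)
    (hw : ∀ v ∈ R, leafWeight A R s v ≠ 0) :
    stemInverse A R s * A * stemInverse A R s = stemInverse A R s :=
  add_sub_outer_inverse (mul_leafToStem hs hcol hw) (stemToLeaf_mul hs hrow hw)
    (leafToStem_mul_stemProj hs) stemProj_mul_leafToStem (stemProj_mul_stemToLeaf hs)

theorem leafToStem_mul_mul_stemToLeaf_apply (x y : ι) :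
    (leafToStem A R s * A * stemToLeaf A R s) x y =
      leafToStem A R s x (s x) * A (s x) (s y) * stemToLeaf A R s (s y) y := by
  rw [mul_apply, Fintype.sum_eq_single (s y), mul_apply, Fintype.sum_eq_single (s x)]
  · intro a ha
    simp [leafToStem, Ne.symm ha]
  · intro b hb
    simp [stemToLeaf, Ne.symm hb]

end StemMatrices

section Stems

variable {n : ℕ} {G : Fin n → Fin n → Prop}

theorem Adjd.symm {i j : Fin n} (h : Adjd G i j) : Adjd G j i :=
  ⟨h.1.symm, h.2.2, h.2.1⟩

open scoped Classical in
noncomputable def stem (G : Fin n → Fin n → Prop) (x : Fin n) : Fin n :=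
  if h : ∃ y, Adjd G x y then h.choose else x

theorem Pendant.adjd_stem {x : Fin n} (hx : Pendant G x) : Adjd G x (stem G x) := by
  have h : ∃ y, Adjd G x y := hx.exists
  rw [stem, dif_pos h]
  exact h.choose_spec

theorem Pendant.adjd_iff {x y : Fin n} (hx : Pendant G x) : Adjd G x y ↔ y = stem G x :=
  ⟨fun h => hx.unique h hx.adjd_stem, fun h => h ▸ hx.adjd_stem⟩

theorem Pendant.stem_stem {x : Fin n} (hx : Pendant G x) (hsx : Pendant G (stem G x)) :
    stem G (stem G x) = x :=
  (hsx.adjd_iff.1 hx.adjd_stem.symm).symm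

structure IsStemSet (G : Fin n → Fin n → Prop) (R : Finset (Fin n)) : Prop where
  pendant : ∀ x ∉ R, Pendant G x
  stem_mem : ∀ x ∉ R, stem G x ∈ R
  exists_leaf : ∀ v ∈ R, ∃ x ∉ R, stem G x = v

-- The non-pendant vertices, together with one end of each isolated 2-cycle.
theorem InClassD.exists_isStemSet (hD : InClassD G) : ∃ R, IsStemSet G R := by
  classical
  refine ⟨({v | ¬Pendant G v ∨ (Pendant G (stem G v) ∧ v < stem G v)} : Finset (Fin n)),
    ?_, ?_, ?_⟩
  all_goals simp only [Finset.mem_filter, Finset.mem_univ, true_and, not_or, not_and, not_not]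
  · exact fun x hx => hx.1
  · intro x ⟨hx, hxs⟩
    by_cases hs : Pendant G (stem G x)
    · rw [hx.stem_stem hs]
      exact Or.inr ⟨hx, lt_of_le_of_ne (not_lt.1 (hxs hs)) hx.adjd_stem.1.symm⟩
    · exact Or.inl hs
  · intro v hv
    by_cases hpv : Pendant G v
    · obtain ⟨hsv, hlt⟩ := hv.resolve_left (not_not.2 hpv)
      refine ⟨stem G v, ⟨hsv, fun _ => ?_⟩, hpv.stem_stem hsv⟩
      rw [hpv.stem_stem hsv]
      exact not_lt.2 hlt.le
    · obtain ⟨x, hvx, hx⟩ := hD.2 v hpv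
      have hxv : stem G x = v := (hx.adjd_iff.1 hvx.symm).symm
      exact ⟨x, ⟨hx, fun h => absurd (hxv ▸ h) hpv⟩, hxv⟩

variable {R : Finset (Fin n)}

namespace IsStemSet

theorem adjd_iff (hR : IsStemSet G R) {x y : Fin n} (hx : x ∉ R) : Adjd G x y ↔ y = stem G x :=
  (hR.pendant x hx).adjd_iff

theorem mem_of_adjd (hR : IsStemSet G R) {x y : Fin n} (hx : x ∉ R) (h : Adjd G x y) : y ∈ R :=
  (hR.adjd_iff hx).1 h ▸ hR.stem_mem x hx

theorem mem_of_adjd_of_adjd (hR : IsStemSet G R) {a x b : Fin n} (hax : Adjd G a x)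
    (hxb : Adjd G x b) (hab : a ≠ b) : x ∈ R := by
  by_contra hx
  exact hab (((hR.adjd_iff hx).1 hax.symm).trans ((hR.adjd_iff hx).1 hxb).symm)

end IsStemSet

end Stems

section Matchings

variable {n : ℕ} {G : Fin n → Fin n → Prop} {R : Finset (Fin n)} {M : Finset (Sym2 (Fin n))}

theorem isEdge_mk {x y : Fin n} : IsEdge G s(x, y) ↔ Adjd G x y := by
  refine ⟨?_, fun h => ⟨x, y, rfl, h⟩⟩
  rintro ⟨i, j, he, h⟩
  rcases Sym2.eq_iff.1 he with ⟨rfl, rfl⟩ | ⟨rfl, rfl⟩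
  exacts [h, h.symm]

theorem IsMatching.adjd (hM : IsMatching G M) {x y : Fin n} (h : s(x, y) ∈ M) : Adjd G x y :=
  isEdge_mk.1 (hM.1 _ h)

theorem IsMatching.eq_of_mem (hM : IsMatching G M) {e f : Sym2 (Fin n)} (he : e ∈ M)
    (hf : f ∈ M) {v : Fin n} (hve : v ∈ e) (hvf : v ∈ f) : e = f :=
  by_contra fun hne => hM.2 e he f hf hne v hve hvf

theorem IsMatching.erase (hM : IsMatching G M) (e : Sym2 (Fin n)) : IsMatching G (M.erase e) :=
  ⟨fun f hf => hM.1 f (Finset.mem_of_mem_erase hf),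
    fun f hf g hg => hM.2 f (Finset.mem_of_mem_erase hf) g (Finset.mem_of_mem_erase hg)⟩

theorem Sym2.mk_eq_mk_iff_of_mem_of_notMem {α : Type*} {S : Finset α} {v u p q : α}
    (hv : v ∈ S) (hq : q ∉ S) : s(v, p) = s(u, q) ↔ v = u ∧ p = q := by
  rw [Sym2.eq_iff]
  refine ⟨fun h => h.resolve_right fun h' => hq (h'.1 ▸ hv), Or.inl⟩

def stemMatching (R : Finset (Fin n)) (f : R → Fin n) : Finset (Sym2 (Fin n)) :=
  Finset.univ.image fun v : R => s((v : Fin n), f v)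

section StemMatching

variable {f : R → Fin n}

theorem mk_injective_of_notMem (hf : ∀ v, f v ∉ R) :
    Function.Injective fun v : R => s((v : Fin n), f v) := fun v u h =>
  Subtype.ext ((Sym2.mk_eq_mk_iff_of_mem_of_notMem v.2 (hf u)).1 h).1

theorem card_stemMatching (hf : ∀ v, f v ∉ R) : (stemMatching R f).card = R.card := by
  rw [stemMatching, Finset.card_image_of_injective _ (mk_injective_of_notMem hf),
    Finset.card_univ, Fintype.card_coe]

theorem stemMatching_inj {f' : R → Fin n} (hf : ∀ v, f v ∉ R)
    (h : stemMatching R f = stemMatching R f') : f = f' := by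
  funext v
  have hmem : s((v : Fin n), f v) ∈ stemMatching R f' :=
    h ▸ Finset.mem_image_of_mem (fun v : R => s((v : Fin n), f v)) (Finset.mem_univ v)
  obtain ⟨u, -, hu⟩ := Finset.mem_image.1 hmem
  obtain ⟨huv, hfu⟩ := (Sym2.mk_eq_mk_iff_of_mem_of_notMem u.2 (hf v)).1 hu
  rw [← hfu, Subtype.ext huv]

theorem IsStemSet.isMatching_stemMatching (hR : IsStemSet G R)
    (hf : ∀ v : R, f v ∈ leavesOf R (stem G) v) : IsMatching G (stemMatching R f) := by
  have hleaf : ∀ v : R, f v ∉ R ∧ stem G (f v) = v := fun v => mem_leavesOf.1 (hf v)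
  refine ⟨fun e he => ?_, fun e he g hg hne z hz hz' => ?_⟩
  · obtain ⟨v, -, rfl⟩ := Finset.mem_image.1 he
    exact isEdge_mk.2 ((hR.adjd_iff (hleaf v).1).2 (hleaf v).2.symm).symm
  obtain ⟨v, -, rfl⟩ := Finset.mem_image.1 he
  obtain ⟨u, -, rfl⟩ := Finset.mem_image.1 hg
  have hvu : (v : Fin n) ≠ u := fun h => hne (by rw [Subtype.ext h])
  rcases Sym2.mem_iff.1 hz with rfl | rfl <;> rcases Sym2.mem_iff.1 hz' with h | h
  · exact hvu h
  · exact (hleaf u).1 (h ▸ v.2)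
  · exact (hleaf v).1 (h ▸ u.2)
  · exact hvu (((hleaf v).2.symm.trans (congrArg (stem G) h)).trans (hleaf u).2)

end StemMatching

namespace IsStemSet

theorem exists_mem_of_isEdge (hR : IsStemSet G R) {e : Sym2 (Fin n)} (he : IsEdge G e) :
    ∃ v ∈ R, v ∈ e := by
  obtain ⟨i, j, rfl, h⟩ := he
  by_cases hi : i ∈ R
  · exact ⟨i, hi, Sym2.mem_mk_left i j⟩
  · exact ⟨j, hR.mem_of_adjd hi h, Sym2.mem_mk_right i j⟩

theorem card_le_card_covered (hR : IsStemSet G R) (hM : IsMatching G M) :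
    M.card ≤ {v ∈ R | ∃ e ∈ M, v ∈ e}.card := by
  refine Finset.card_le_card_of_forall_subsingleton (fun e v => v ∈ e) (fun e he => ?_)
    fun v _ e he f hf => hM.eq_of_mem he.1 hf.1 he.2 hf.2
  obtain ⟨v, hv, hve⟩ := hR.exists_mem_of_isEdge (hM.1 e he)
  exact ⟨v, Finset.mem_filter.2 ⟨hv, e, he, hve⟩, hve⟩

theorem card_le (hR : IsStemSet G R) (hM : IsMatching G M) : M.card ≤ R.card :=
  (hR.card_le_card_covered hM).trans (Finset.card_filter_le _ _)

theorem card_eq_of_isMaxMatching (hR : IsStemSet G R) (hM : IsMaxMatching G M) :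
    M.card = R.card := by
  refine le_antisymm (hR.card_le hM.1) ?_
  choose f hf using fun v : R =>
    (hR.exists_leaf v v.2).imp fun x hx => mem_leavesOf.2 hx
  exact card_stemMatching (fun v => (mem_leavesOf.1 (hf v)).1) ▸
    hM.2 _ (hR.isMatching_stemMatching hf)

theorem notMem_of_mk_mem (hR : IsStemSet G R) (hM : IsMaxMatching G M) {v x : Fin n} (hv : v ∈ R)
    (h : s(v, x) ∈ M) : x ∉ R := by
  intro hx
  have hvx : v ≠ x := (hM.1.adjd h).1
  have hcov : {w ∈ R | ∃ e ∈ M.erase s(v, x), w ∈ e} ⊆ (R.erase v).erase x := by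
    intro w hw
    obtain ⟨hwR, e, he, hwe⟩ := Finset.mem_filter.1 hw
    obtain ⟨hne, heM⟩ := Finset.mem_erase.1 he
    refine Finset.mem_erase.2 ⟨fun hwx => ?_, Finset.mem_erase.2 ⟨fun hwv => ?_, hwR⟩⟩
    · exact hne (hM.1.eq_of_mem heM h hwe (hwx ▸ Sym2.mem_mk_right _ _))
    · exact hne (hM.1.eq_of_mem heM h hwe (hwv ▸ Sym2.mem_mk_left _ _))
  have hle := (hR.card_le_card_covered (hM.1.erase s(v, x))).trans (Finset.card_le_card hcov)
  have hpos : 0 < (R.erase v).card :=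
    Finset.card_pos.2 ⟨x, Finset.mem_erase.2 ⟨hvx.symm, hx⟩⟩
  rw [Finset.card_erase_of_mem h, hR.card_eq_of_isMaxMatching hM,
    Finset.card_erase_of_mem (Finset.mem_erase.2 ⟨hvx.symm, hx⟩)] at hle
  rw [Finset.card_erase_of_mem hv] at hle hpos
  omega

theorem mk_mem_cases (hR : IsStemSet G R) (hM : IsMaxMatching G M) {a b : Fin n}
    (h : s(a, b) ∈ M) :
    (a ∉ R ∧ b = stem G a) ∨ (b ∉ R ∧ a = stem G b) := by
  by_cases ha : a ∈ R
  · have hb := hR.notMem_of_mk_mem hM ha h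
    exact Or.inr ⟨hb, (hR.adjd_iff hb).1 (hM.1.adjd h).symm⟩
  · exact Or.inl ⟨ha, (hR.adjd_iff ha).1 (hM.1.adjd h)⟩

theorem exists_leaf_mem (hR : IsStemSet G R) (hM : IsMaxMatching G M) {v : Fin n} (hv : v ∈ R) :
    ∃ x ∈ leavesOf R (stem G) v, s(v, x) ∈ M := by
  have hcov : {w ∈ R | ∃ e ∈ M, w ∈ e} = R :=
    Finset.eq_of_subset_of_card_le (Finset.filter_subset _ _)
      (hR.card_eq_of_isMaxMatching hM ▸ hR.card_le_card_covered hM.1)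
  obtain ⟨e, he, hve⟩ := (Finset.mem_filter.1 (hcov ▸ hv : v ∈ _)).2
  obtain ⟨x, rfl⟩ := Sym2.mem_iff_exists.1 hve
  have hx := hR.notMem_of_mk_mem hM hv he
  exact ⟨x, mem_leavesOf.2 ⟨hx, ((hR.adjd_iff hx).1 (hM.1.adjd he).symm).symm⟩, he⟩

theorem isMaxMatching_iff (hR : IsStemSet G R) :
    IsMaxMatching G M ↔
      ∃ f ∈ Fintype.piFinset (fun v : R => leavesOf R (stem G) v), stemMatching R f = M := by
  constructor
  · intro hM
    choose f hf using fun v : R => hR.exists_leaf_mem hM v.2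
    have hleaf : ∀ v : R, f v ∈ leavesOf R (stem G) v := fun v => (hf v).1
    refine ⟨f, Fintype.mem_piFinset.2 hleaf, Finset.eq_of_subset_of_card_le ?_ ?_⟩
    · intro e he
      obtain ⟨v, -, rfl⟩ := Finset.mem_image.1 he
      exact (hf v).2
    · rw [card_stemMatching fun v => (mem_leavesOf.1 (hleaf v)).1, hR.card_eq_of_isMaxMatching hM]
  · rintro ⟨f, hf, rfl⟩
    rw [Fintype.mem_piFinset] at hf
    exact ⟨hR.isMatching_stemMatching hf,
      fun M' hM' => (hR.card_le hM').trans
        (card_stemMatching fun v => (mem_leavesOf.1 (hf v)).1).ge⟩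

end IsStemSet

end Matchings

section MaxMatchingSums

variable {n : ℕ} {A : Matrix (Fin n) (Fin n) ℝ} {R : Finset (Fin n)}

theorem mem_maxMatchings {M : Finset (Sym2 (Fin n))} :
    M ∈ maxMatchings A ↔ IsMaxMatching (DA A) M := by
  simp [maxMatchings]

theorem IsStemSet.sum_maxMatchings_prod (hR : IsStemSet (DA A) R) {β : Type*} [CommSemiring β]
    (ω : Sym2 (Fin n) → β) :
    ∑ M ∈ maxMatchings A, ∏ e ∈ M, ω e =
      ∏ v ∈ R, ∑ p ∈ leavesOf R (stem (DA A)) v, ω s(v, p) := by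
  have himage : maxMatchings A =
      (Fintype.piFinset fun v : R => leavesOf R (stem (DA A)) v).image (stemMatching R) := by
    ext M
    rw [mem_maxMatchings, hR.isMaxMatching_iff, Finset.mem_image]
  have hleaf :
      ∀ f ∈ Fintype.piFinset (fun v : R => leavesOf R (stem (DA A)) v), ∀ v, f v ∉ R :=
    fun f hf v => (mem_leavesOf.1 (Fintype.mem_piFinset.1 hf v)).1
  rw [himage, Finset.sum_image fun f hf f' _ h => stemMatching_inj (hleaf f hf) h,
    ← Finset.prod_coe_sort, Finset.prod_univ_sum]
  refine Finset.sum_congr rfl fun f hf => ?_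
  rw [stemMatching, Finset.prod_image fun v _ u _ h => mk_injective_of_notMem (hleaf f hf) h]

theorem IsStemSet.delta_eq_prod (hR : IsStemSet (DA A) R) :
    Delta A = ∏ v ∈ R, leafWeight A R (stem (DA A)) v :=
  hR.sum_maxMatchings_prod (cycProd A)

noncomputable def pinnedEdges (G : Fin n → Fin n → Prop) (L : Finset (Fin n)) :
    Finset (Sym2 (Fin n)) :=
  L.image fun p => s(stem G p, p)

theorem mk_stem_mem_pinnedEdges {G : Fin n → Fin n → Prop} {L : Finset (Fin n)} {p : Fin n}
    (hp : p ∈ L) : s(stem G p, p) ∈ pinnedEdges G L :=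
  Finset.mem_image_of_mem _ hp

theorem IsStemSet.mk_mem_pinnedEdges_iff (hR : IsStemSet (DA A) R) {L : Finset (Fin n)}
    (hL : ∀ p ∈ L, p ∉ R) {v q : Fin n} (hv : v ∈ R) (hq : q ∉ R) :
    s(v, q) ∈ pinnedEdges (DA A) L ↔ q ∈ L ∧ stem (DA A) q = v := by
  simp only [pinnedEdges, Finset.mem_image]
  constructor
  · rintro ⟨p, hp, h⟩
    obtain ⟨rfl, rfl⟩ := (Sym2.mk_eq_mk_iff_of_mem_of_notMem (hR.stem_mem p (hL p hp)) hq).1 h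
    exact ⟨hp, rfl⟩
  · rintro ⟨hqL, rfl⟩
    exact ⟨q, hqL, rfl⟩

-- Turns a sum over the maximum matchings through the pinned edges into a sum over all maximum
-- matchings, which factors over the stems.
noncomputable def pinnedWeight (A : Matrix (Fin n) (Fin n) ℝ) (L : Finset (Fin n))
    (e : Sym2 (Fin n)) : ℝ :=
  if e ∈ pinnedEdges (DA A) L then 1
  else if ∃ p ∈ L, stem (DA A) p ∈ e then 0 else cycProd A e

section Pinned

variable {L : Finset (Fin n)}

theorem IsStemSet.prod_pinnedWeight (hR : IsStemSet (DA A) R) (hL : ∀ p ∈ L, p ∉ R)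
    (hinj : Set.InjOn (stem (DA A)) L) {M : Finset (Sym2 (Fin n))} (hM : IsMaxMatching (DA A) M) :
    ∏ e ∈ M, pinnedWeight A L e =
      if pinnedEdges (DA A) L ⊆ M then ∏ e ∈ M \ pinnedEdges (DA A) L, cycProd A e
      else 0 := by
  by_cases hFM : pinnedEdges (DA A) L ⊆ M
  · rw [if_pos hFM, ← Finset.prod_sdiff hFM,
      Finset.prod_eq_one (s := pinnedEdges (DA A) L) fun e he => by rw [pinnedWeight, if_pos he],
      mul_one]
    refine Finset.prod_congr rfl fun e he => ?_
    obtain ⟨heM, heF⟩ := Finset.mem_sdiff.1 he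
    rw [pinnedWeight, if_neg heF, if_neg]
    rintro ⟨p, hp, hpe⟩
    have hpF := mk_stem_mem_pinnedEdges (G := DA A) hp
    exact heF (hM.1.eq_of_mem heM (hFM hpF) hpe (Sym2.mem_mk_left _ _) ▸ hpF)
  · rw [if_neg hFM]
    obtain ⟨e, heF, heM⟩ := Finset.not_subset.1 hFM
    obtain ⟨p, hp, rfl⟩ := Finset.mem_image.1 heF
    obtain ⟨q, hq, hqM⟩ := hR.exists_leaf_mem hM (hR.stem_mem p (hL p hp))
    refine Finset.prod_eq_zero hqM ?_
    rw [mem_leavesOf] at hq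
    rw [pinnedWeight, if_neg, if_pos ⟨p, hp, Sym2.mem_mk_left _ _⟩]
    rw [hR.mk_mem_pinnedEdges_iff hL (hR.stem_mem p (hL p hp)) hq.1]
    rintro ⟨hqL, hqp⟩
    exact heM (hinj hqL hp hqp ▸ hqM)

theorem IsStemSet.sum_pinnedWeight (hR : IsStemSet (DA A) R) (hL : ∀ p ∈ L, p ∉ R)
    (hinj : Set.InjOn (stem (DA A)) L) {v : Fin n} (hv : v ∈ R) :
    ∑ q ∈ leavesOf R (stem (DA A)) v, pinnedWeight A L s(v, q) =
      if v ∈ L.image (stem (DA A)) then 1 else leafWeight A R (stem (DA A)) v := by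
  by_cases hvL : v ∈ L.image (stem (DA A))
  · obtain ⟨p, hp, rfl⟩ := Finset.mem_image.1 hvL
    rw [if_pos hvL, Finset.sum_eq_single p]
    · rw [pinnedWeight, if_pos (mk_stem_mem_pinnedEdges hp)]
    · intro q hq hqp
      rw [mem_leavesOf] at hq
      rw [pinnedWeight, if_neg, if_pos ⟨p, hp, Sym2.mem_mk_left _ _⟩]
      rw [hR.mk_mem_pinnedEdges_iff hL hv hq.1]
      exact fun h => hqp (hinj h.1 hp h.2)
    · exact fun hp' => absurd (mem_leavesOf.2 ⟨hL p hp, rfl⟩) hp'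
  · rw [if_neg hvL]
    refine Finset.sum_congr rfl fun q hq => ?_
    rw [mem_leavesOf] at hq
    rw [pinnedWeight, if_neg, if_neg]
    · rfl
    · rintro ⟨p, hp, hpq⟩
      rcases Sym2.mem_iff.1 hpq with h | h
      · exact hvL (h ▸ Finset.mem_image_of_mem _ hp)
      · exact hq.1 (h ▸ hR.stem_mem p (hL p hp))
    · rw [hR.mk_mem_pinnedEdges_iff hL hv hq.1]
      exact fun h => hvL (h.2 ▸ Finset.mem_image_of_mem _ h.1)

theorem IsStemSet.sum_pinned (hR : IsStemSet (DA A) R) (hL : ∀ p ∈ L, p ∉ R)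
    (hinj : Set.InjOn (stem (DA A)) L) :
    ∑ M ∈ maxMatchings A with pinnedEdges (DA A) L ⊆ M,
        ∏ e ∈ M \ pinnedEdges (DA A) L, cycProd A e =
      ∏ v ∈ R \ L.image (stem (DA A)), leafWeight A R (stem (DA A)) v := by
  calc _ = ∑ M ∈ maxMatchings A, ∏ e ∈ M, pinnedWeight A L e := by
        rw [Finset.sum_filter]
        exact Finset.sum_congr rfl fun M hM =>
          (hR.prod_pinnedWeight hL hinj (mem_maxMatchings.1 hM)).symm
    _ = ∏ v ∈ R, if v ∈ L.image (stem (DA A)) then 1 else leafWeight A R (stem (DA A)) v := by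
        rw [hR.sum_maxMatchings_prod]
        exact Finset.prod_congr rfl fun v hv => hR.sum_pinnedWeight hL hinj hv
    _ = _ := by
        rw [Finset.prod_ite, Finset.prod_const_one, one_mul, Finset.sdiff_eq_filter]

end Pinned

end MaxMatchingSums

section Chains

variable {n : ℕ} {G : Fin n → Fin n → Prop} {R : Finset (Fin n)} {M : Finset (Sym2 (Fin n))}

theorem isCycleChainBtw_pair {x y : Fin n} : IsCycleChainBtw G x y [x, y] ↔ Adjd G x y := by
  change ([x, y].Nodup ∧ 2 ≤ [x, y].length ∧ List.IsChain (Adjd G) [x, y]) ∧ _ ↔ _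
  simp only [List.nodup_cons, List.mem_singleton,
    List.not_mem_nil, not_false_eq_true, List.nodup_nil, and_true, List.length_cons,
    List.length_nil, List.head?_cons, List.getLast?_cons_cons, List.getLast?_singleton,
    List.isChain_cons_cons, List.isChain_singleton]
  exact ⟨fun h => h.2.2, fun h => ⟨h.1, by norm_num, h⟩⟩

theorem isAltChain_pair {x y : Fin n} : IsAltChain M [x, y] ↔ s(x, y) ∈ M := by
  simp [IsAltChain, chainEdges]

theorem isCycleChainBtw_quad {a b c d : Fin n} :
    IsCycleChainBtw G a d [a, b, c, d] ↔
      [a, b, c, d].Nodup ∧ Adjd G a b ∧ Adjd G b c ∧ Adjd G c d := by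
  change ([a, b, c, d].Nodup ∧ 2 ≤ [a, b, c, d].length ∧
    List.IsChain (Adjd G) [a, b, c, d]) ∧ _ ↔ _
  simp only [List.length_cons, List.length_nil, List.head?_cons,
    List.getLast?_cons_cons, List.getLast?_singleton, List.isChain_cons_cons,
    List.isChain_singleton, and_true]
  exact ⟨fun h => ⟨h.1, h.2.2⟩, fun h => ⟨h.1, by norm_num, h.2⟩⟩

theorem isAltChain_quad {a b c d : Fin n} :
    IsAltChain M [a, b, c, d] ↔ s(a, b) ∈ M ∧ s(b, c) ∉ M ∧ s(c, d) ∈ M := by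
  simp only [IsAltChain, chainEdges, List.tail_cons, List.zipWith_cons_cons, List.zipWith_nil_right,
    List.length_cons, List.length_nil, List.get_eq_getElem]
  constructor
  · rintro ⟨-, h⟩
    exact ⟨(h 0 (by norm_num)).2 (by decide),
      fun h1 => absurd ((h 1 (by norm_num)).1 h1) (by decide), (h 2 (by norm_num)).2 (by decide)⟩
  · rintro ⟨h0, h1, h2⟩
    refine ⟨by decide, fun k hk => ?_⟩
    interval_cases k <;> simp [h0, h1, h2]

end Chains

theorem IsStemSet.eq_of_isAltChain {n : ℕ} {G : Fin n → Fin n → Prop} {R : Finset (Fin n)}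
    {M : Finset (Sym2 (Fin n))} (hR : IsStemSet G R) (hM : IsMaxMatching G M) {x y : Fin n}
    {c : List (Fin n)} (hc : IsCycleChainBtw G x y c) (ha : IsAltChain M c) :
    c = [x, y] ∨ x ∉ R ∧ y ∉ R ∧ c = [x, stem G x, stem G y, y] := by
  obtain ⟨⟨hnd, hlen, hch⟩, hhead, hlast⟩ := hc
  replace hch : List.IsChain (Adjd G) c := hch
  have hmem : ∀ k (hk : k < (chainEdges c).length), Even k → (chainEdges c)[k] ∈ M :=
    fun k hk => (ha.2 k hk).2
  rcases c with _ | ⟨a, _ | ⟨b, _ | ⟨c, _ | ⟨d, _ | ⟨e, rest⟩⟩⟩⟩⟩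
  · simp at hlen
  · simp at hlen
  · simp only [List.head?_cons, Option.some.injEq, List.getLast?_cons_cons,
      List.getLast?_singleton] at hhead hlast
    exact Or.inl (by rw [hhead, hlast])
  · exact absurd ha.1 (by simp [chainEdges])
  · simp only [List.head?_cons, Option.some.injEq, List.getLast?_cons_cons,
      List.getLast?_singleton] at hhead hlast
    subst a d
    have h0 : s(x, b) ∈ M := by simpa [chainEdges] using hmem 0 (by simp [chainEdges]) (by decide)
    have h2 : s(c, y) ∈ M := by simpa [chainEdges] using hmem 2 (by simp [chainEdges]) (by decide)
    simp only [List.isChain_cons_cons, List.isChain_singleton, and_true] at hch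
    obtain ⟨hxb, hbc, hcy⟩ := hch
    have hbR : b ∈ R := hR.mem_of_adjd_of_adjd hxb hbc (by rintro rfl; simp at hnd)
    have hcR : c ∈ R := hR.mem_of_adjd_of_adjd hbc hcy (by rintro rfl; simp at hnd)
    have hx : x ∉ R := hR.notMem_of_mk_mem hM hbR (Sym2.eq_swap ▸ h0)
    have hy : y ∉ R := hR.notMem_of_mk_mem hM hcR h2
    refine Or.inr ⟨hx, hy, ?_⟩
    rw [← (hR.adjd_iff hx).1 hxb, ← (hR.adjd_iff hy).1 hcy.symm]
  · exfalso
    have h2 : s(c, d) ∈ M := by simpa [chainEdges] using hmem 2 (by simp [chainEdges]) (by decide)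
    simp only [List.isChain_cons_cons] at hch
    obtain ⟨-, hbc, hcd, hde, -⟩ := hch
    exact hR.notMem_of_mk_mem hM (hR.mem_of_adjd_of_adjd hbc hcd (by rintro rfl; simp at hnd))
      h2 (hR.mem_of_adjd_of_adjd hcd hde (by rintro rfl; simp at hnd))

section Mu

open scoped Classical

variable {n : ℕ} {A : Matrix (Fin n) (Fin n) ℝ} {R : Finset (Fin n)}

theorem mu_eq_zero_of_not_maxMatchable {x y : Fin n} (h : ¬MaxMatchable A x y) : mu A x y = 0 := by
  rw [mu, beta, if_neg h, zero_mul]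

theorem mu_eq_of_forall_eq {x y : Fin n} {c₀ : List (Fin n)}
    (hc₀ : IsCycleChainBtw (DA A) x y c₀)
    (huniq : ∀ M c, IsMaxMatching (DA A) M → IsCycleChainBtw (DA A) x y c → IsAltChain M c →
      c = c₀) :
    mu A x y = (-1) ^ ((c₀.length - 2) / 2) * pathProd A c₀ *
      ∑ M ∈ maxMatchings A with IsAltChain M c₀,
        ∏ e ∈ M with e ∉ chainEdges c₀, cycProd A e := by
  have hMM : ∀ M, M ∈ MMset A x y ↔ M ∈ maxMatchings A ∧ IsAltChain M c₀ := fun M => by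
    rw [mem_maxMatchings]
    exact ⟨fun ⟨hM, c, hc, ha⟩ => ⟨hM, huniq M c hM hc ha ▸ ha⟩,
      fun ⟨hM, ha⟩ => ⟨hM, c₀, hc₀, ha⟩⟩
  have hset : (MMset A x y).toFinite.toFinset = {M ∈ maxMatchings A | IsAltChain M c₀} := by
    ext M
    rw [Set.Finite.mem_toFinset, hMM, Finset.mem_filter]
  rw [mu, hset]
  by_cases h : MaxMatchable A x y
  · have hex : ∃ c, IsCycleChainBtw (DA A) x y c ∧ ∃ M ∈ MMset A x y, IsAltChain M c := by
      obtain ⟨M, hM⟩ := h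
      exact ⟨c₀, hc₀, M, hM, ((hMM M).1 hM).2⟩
    have hchain : theChain A x y = c₀ := by
      obtain ⟨hc, M, hM, ha⟩ := hex.choose_spec
      rw [theChain, dif_pos hex]
      exact huniq M _ hM.1 hc ha
    simp only [beta, if_pos h, hchain, betaBar]
  · have hempty : {M ∈ maxMatchings A | IsAltChain M c₀} = ∅ :=
      Finset.filter_eq_empty_iff.2 fun M hM ha => h ⟨M, (hMM M).2 ⟨hM, ha⟩⟩
    rw [beta, if_neg h, hempty, Finset.sum_empty, Finset.sum_empty, mul_zero, mul_zero]

theorem IsStemSet.mu_leaf_stem (hR : IsStemSet (DA A) R) {x : Fin n} (hx : x ∉ R) :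
    mu A x (stem (DA A) x) =
      A x (stem (DA A) x) * ∏ v ∈ R \ {stem (DA A) x}, leafWeight A R (stem (DA A)) v := by
  have hadj := (hR.pendant x hx).adjd_stem
  rw [mu_eq_of_forall_eq (isCycleChainBtw_pair.2 hadj) fun M c hM hc ha => ?_]
  · rw [← Finset.image_singleton, ← hR.sum_pinned (by simpa using hx)
      (by rw [Finset.coe_singleton]; exact Set.injOn_singleton _ _)]
    simp [pinnedEdges, pathProd, chainEdges, isAltChain_pair, Finset.sdiff_singleton_eq_erase,
      Finset.filter_ne', Sym2.eq_swap]
  · rcases hR.eq_of_isAltChain hM hc ha with h | ⟨-, hs, -⟩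
    · exact h
    · exact absurd (hR.stem_mem x hx) hs

theorem IsStemSet.mu_stem_leaf (hR : IsStemSet (DA A) R) {y : Fin n} (hy : y ∉ R) :
    mu A (stem (DA A) y) y =
      A (stem (DA A) y) y * ∏ v ∈ R \ {stem (DA A) y}, leafWeight A R (stem (DA A)) v := by
  have hadj := (hR.pendant y hy).adjd_stem.symm
  rw [mu_eq_of_forall_eq (isCycleChainBtw_pair.2 hadj) fun M c hM hc ha => ?_]
  · rw [← Finset.image_singleton, ← hR.sum_pinned (by simpa using hy)
      (by rw [Finset.coe_singleton]; exact Set.injOn_singleton _ _)]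
    simp [pinnedEdges, pathProd, chainEdges, isAltChain_pair, Finset.sdiff_singleton_eq_erase,
      Finset.filter_ne']
  · rcases hR.eq_of_isAltChain hM hc ha with h | ⟨hs, -⟩
    · exact h
    · exact absurd (hR.stem_mem y hy) hs

theorem IsStemSet.mu_leaf_leaf (hR : IsStemSet (DA A) R) {x y : Fin n} (hx : x ∉ R) (hy : y ∉ R)
    (hxy : Adjd (DA A) (stem (DA A) x) (stem (DA A) y)) :
    mu A x y = -(A x (stem (DA A) x) * A (stem (DA A) x) (stem (DA A) y) * A (stem (DA A) y) y) *
      ∏ v ∈ R \ {stem (DA A) x, stem (DA A) y}, leafWeight A R (stem (DA A)) v := by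
  have hsx := hR.stem_mem x hx
  have hsy := hR.stem_mem y hy
  have hc₀ : IsCycleChainBtw (DA A) x y [x, stem (DA A) x, stem (DA A) y, y] := by
    refine isCycleChainBtw_quad.2 ⟨?_, (hR.pendant x hx).adjd_stem, hxy,
      (hR.pendant y hy).adjd_stem.symm⟩
    have hne : x ≠ y := by
      rintro rfl
      exact hxy.1 rfl
    have hne_stem : ∀ {p v : Fin n}, p ∉ R → v ∈ R → p ≠ v := fun hp hv h =>
      hp (h ▸ hv)
    simp [hne, hxy.1, hne_stem hx hsx, hne_stem hx hsy, (hne_stem hy hsx).symm,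
      (hne_stem hy hsy).symm]
  rw [mu_eq_of_forall_eq hc₀ fun M c hM hc ha => ?_]
  · have hroots : ∀ M ∈ maxMatchings A, s(stem (DA A) x, stem (DA A) y) ∉ M := fun M hM h =>
      hR.notMem_of_mk_mem (mem_maxMatchings.1 hM) hsx h hsy
    have hsum : ∑ M ∈ maxMatchings A with IsAltChain M [x, stem (DA A) x, stem (DA A) y, y],
          ∏ e ∈ M with e ∉ chainEdges [x, stem (DA A) x, stem (DA A) y, y], cycProd A e =
        ∑ M ∈ maxMatchings A with pinnedEdges (DA A) {x, y} ⊆ M,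
          ∏ e ∈ M \ pinnedEdges (DA A) {x, y}, cycProd A e := by
      refine Finset.sum_congr (Finset.filter_congr fun M hM => ?_) fun M hM => ?_
      · simp [isAltChain_quad, pinnedEdges, Finset.insert_subset_iff, Sym2.eq_swap, hroots M hM]
      · refine Finset.prod_congr ?_ fun _ _ => rfl
        ext e
        simp [pinnedEdges, chainEdges, Sym2.eq_swap]
        rintro heM - - rfl
        exact hroots M (Finset.mem_filter.1 hM).1 heM
    rw [hsum, hR.sum_pinned (by simpa using ⟨hx, hy⟩) (by simpa using fun h => absurd h hxy.1)]
    simp [pathProd, mul_assoc]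
  · rcases hR.eq_of_isAltChain hM hc ha with rfl | ⟨-, -, h⟩
    · exact absurd (hR.mem_of_adjd hx (isCycleChainBtw_pair.1 hc)) hy
    · exact h

end Mu

section Entries

variable {n : ℕ} {A : Matrix (Fin n) (Fin n) ℝ} {R : Finset (Fin n)}

theorem IsStemSet.maxMatchable_cases (hR : IsStemSet (DA A) R) {x y : Fin n}
    (h : MaxMatchable A x y) :
    x ∉ R ∧ y = stem (DA A) x ∨ y ∉ R ∧ x = stem (DA A) y ∨
      x ∉ R ∧ y ∉ R ∧ Adjd (DA A) (stem (DA A) x) (stem (DA A) y) := by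
  obtain ⟨M, hM, c, hc, ha⟩ := h
  rcases hR.eq_of_isAltChain hM hc ha with rfl | ⟨hx, hy, rfl⟩
  · rcases hR.mk_mem_cases hM (isAltChain_pair.1 ha) with h | h
    exacts [Or.inl h, Or.inr (Or.inl h)]
  · exact Or.inr (Or.inr ⟨hx, hy, (isCycleChainBtw_quad.1 hc).2.2.1⟩)

theorem IsSSD.adjd_of_ne_zero (hA : IsSSD (DA A)) {i j : Fin n} (h : A i j ≠ 0) :
    Adjd (DA A) i j :=
  ⟨fun hij => hA.1 i (hij ▸ h), h, hA.2 i j h⟩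

theorem IsStemSet.apply_eq_zero_of_ne_stem (hR : IsStemSet (DA A) R) (hA : IsSSD (DA A))
    {x k : Fin n} (hx : x ∉ R) (hk : k ≠ stem (DA A) x) : A x k = 0 ∧ A k x = 0 := by
  constructor <;> by_contra h
  · exact hk ((hR.adjd_iff hx).1 (hA.adjd_of_ne_zero h))
  · exact hk ((hR.adjd_iff hx).1 (hA.adjd_of_ne_zero h).symm)

theorem IsStemSet.leafWeight_ne_zero (hR : IsStemSet (DA A) R) (hΔ : Delta A ≠ 0) :
    ∀ v ∈ R, leafWeight A R (stem (DA A)) v ≠ 0 :=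
  Finset.prod_ne_zero_iff.1 (hR.delta_eq_prod ▸ hΔ)

theorem IsStemSet.mul_prod_sdiff_div_delta (hR : IsStemSet (DA A) R) (hΔ : Delta A ≠ 0)
    {T : Finset (Fin n)} (hT : T ⊆ R) (c : ℝ) :
    c * (∏ v ∈ R \ T, leafWeight A R (stem (DA A)) v) / Delta A =
      c / ∏ v ∈ T, leafWeight A R (stem (DA A)) v := by
  have hP : ∏ v ∈ R \ T, leafWeight A R (stem (DA A)) v ≠ 0 :=
    Finset.prod_ne_zero_iff.2 fun v hv => hR.leafWeight_ne_zero hΔ v (Finset.mem_sdiff.1 hv).1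
  rw [hR.delta_eq_prod, ← Finset.prod_sdiff hT, mul_comm (∏ v ∈ R \ T, _),
    mul_div_mul_right _ _ hP]

theorem IsStemSet.mu_div_delta_eq (hR : IsStemSet (DA A) R) (hA : IsSSD (DA A))
    (hΔ : Delta A ≠ 0) (x y : Fin n) :
    mu A x y / Delta A = stemInverse A R (stem (DA A)) x y := by
  have hzero : ¬MaxMatchable A x y → mu A x y / Delta A = 0 := fun h => by
    rw [mu_eq_zero_of_not_maxMatchable h, zero_div]
  have hsx := hR.stem_mem x
  have hsy := hR.stem_mem y
  simp only [stemInverse, Matrix.sub_apply, Matrix.add_apply,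
    leafToStem_mul_mul_stemToLeaf_apply]
  by_cases hx : x ∈ R
  · by_cases hy : y ∉ R ∧ stem (DA A) y = x
    · obtain ⟨hy, rfl⟩ := hy
      rw [hR.mu_stem_leaf hy, hR.mul_prod_sdiff_div_delta hΔ (Finset.singleton_subset_iff.2 hx),
        Finset.prod_singleton]
      simp [leafToStem, stemToLeaf, hx, hy]
    · rw [hzero fun h => ?_]
      · simp [leafToStem, stemToLeaf, hx, hy]
      · rcases hR.maxMatchable_cases h with h | h | h
        exacts [h.1 hx, hy ⟨h.1, h.2.symm⟩, h.1 hx]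
  by_cases hyR : y ∈ R
  · by_cases hyx : y = stem (DA A) x
    · subst hyx
      rw [hR.mu_leaf_stem hx, hR.mul_prod_sdiff_div_delta hΔ (Finset.singleton_subset_iff.2 hyR),
        Finset.prod_singleton]
      simp [leafToStem, stemToLeaf, hx, hyR]
    · rw [hzero fun h => ?_]
      · simp [leafToStem, stemToLeaf, hyR, Ne.symm hyx]
      · rcases hR.maxMatchable_cases h with h | h | h
        exacts [hyx h.2, h.1 hyR, h.2.1 hyR]
  have hsxy : stem (DA A) x ≠ y := fun h => hyR (h ▸ hsx hx)
  have hsyx : stem (DA A) y ≠ x := fun h => hx (h ▸ hsy hyR)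
  by_cases hadj : Adjd (DA A) (stem (DA A) x) (stem (DA A) y)
  · rw [hR.mu_leaf_leaf hx hyR hadj, hR.mul_prod_sdiff_div_delta hΔ
      (Finset.insert_subset (hsx hx) (Finset.singleton_subset_iff.2 (hsy hyR))),
      Finset.prod_pair hadj.1]
    simp only [leafToStem, stemToLeaf, hx, hyR, hsxy, hsyx, not_false_eq_true, true_and,
      and_false, if_false, if_true, zero_add, zero_sub]
    ring
  · have hA0 : A (stem (DA A) x) (stem (DA A) y) = 0 := by
      by_contra h
      exact hadj (hA.adjd_of_ne_zero h)
    rw [hzero fun h => ?_]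
    · simp [leafToStem, stemToLeaf, hA0, hsxy, hsyx]
    · rcases hR.maxMatchable_cases h with h | h | h
      exacts [hyR (h.2 ▸ hsx hx), hx (h.2 ▸ hsy hyR), hadj h.2.2]

end Entries

theorem BAB_eq_B_general {n : ℕ} (A : Matrix (Fin n) (Fin n) ℝ)
    (hD : InClassD (DA A)) (hΔ : Delta A ≠ 0)
    (B : Matrix (Fin n) (Fin n) ℝ) (hB : ∀ i j, B i j = mu A i j / Delta A) :
    B * A * B = B := by
  obtain ⟨R, hR⟩ := hD.exists_isStemSet
  have hB' : B = stemInverse A R (stem (DA A)) := by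
    ext i j
    rw [hB, hR.mu_div_delta_eq hD.1 hΔ]
  rw [hB']
  exact stemInverse_mul_mul hR.stem_mem
    (fun x hx k hk => (hR.apply_eq_zero_of_ne_stem hD.1 hx hk).2)
    (fun x hx k hk => (hR.apply_eq_zero_of_ne_stem hD.1 hx hk).1) (hR.leafWeight_ne_zero hΔ)

/-- Lemma 2.10: with `B = (μ_{ij}/Δ_A)`, one has `BAB = B`. -/
theorem BAB_eq_B {n : ℕ} (A : Matrix (Fin n) (Fin n) ℝ)
    (hD : InClassD (DA A)) (hSC : StronglyConnected (DA A)) (hΔ : Delta A ≠ 0)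
    (B : Matrix (Fin n) (Fin n) ℝ) (hB : ∀ i j, B i j = mu A i j / Delta A) :
    B * A * B = B :=
  BAB_eq_B_general A hD hΔ B hB
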